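/- Let f : ℂ → ℂ be continuous on the closed unit disk D̄ and holomorphic (complex differentiable) on the open unit disk. Then for every φ ∈ H² the product f·φ again lies in H² (hence T(f)φ = f·φ), and T(f) commutes with T(ζ): T(f)∘T(ζ) = T(ζ)∘T(f). -/

import Mathlib

open MeasureTheory Metric InnerProductSpace

noncomputable section

/-- The rotation-invariant probability measure on the circle `|ζ| = q^{m/2}`. -/
def nu (q : ℝ) (m : ℕ) : Measure ℂ :=
  Measure.map (fun θ : ℝ => ((Real.sqrt q ^ m : ℝ) : ℂ) * Complex.exp (Complex.I * θ))
    ((ENNReal.ofReal (2 * Real.pi)⁻¹) • volume.restrict (Set.Ico 0 (2 * Real.pi)))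

/-- The measure `μ = Σ_m q^m (∏_{i≥0}(1−q^{m+i+1})) ν_m` on `ℂ`. -/
def mu (q : ℝ) : Measure ℂ :=
  Measure.sum fun m : ℕ =>
    (ENNReal.ofReal (q ^ m * ∏' i : ℕ, (1 - q ^ (m + i + 1)))) • nu q m

/-- `H²` : the closed linear span in `L²(ℂ, μ)` of the (classes of the) monomials `ζ ↦ ζⁿ`. -/
def Hsq (q : ℝ) : Submodule ℂ (Lp ℂ 2 (mu q)) :=
  (Submodule.span ℂ {φ : Lp ℂ 2 (mu q) |
      ∃ n : ℕ, (φ : ℂ → ℂ) =ᵐ[mu q] fun ζ => ζ ^ n}).topologicalClosure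

/-!
The measure `μ` lives on the closed unit disk, so bounded continuous functions act on `L²(μ)` by
multiplication, and the multipliers of `H²` form a closed subspace of `L^∞(μ)`. It contains the
monomials (since `ζ^k ζ^n = ζ^(k+n)`), hence all polynomials, and `f` is a uniform limit of
polynomials on the closed disk: first `f(rζ)` with `r < 1` is uniformly close to `f`, then a
partial sum of its Taylor series is uniformly close to `f(rζ)`. So `f·φ ∈ H²`, and since `T(f)φ`
and `f·φ` have the same inner products with all of `H²`, they agree. Two multiplication operators
commute.
-/

open scoped NNReal ENNReal Polynomial

theorem nu_ae_mem_closedBall {q : ℝ} (hq : q ≤ 1) (m : ℕ) :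
    ∀ᵐ ζ ∂nu q m, ζ ∈ closedBall (0 : ℂ) 1 := by
  refine (ae_map_iff (by fun_prop) measurableSet_closedBall).2
    (Measure.ae_smul_measure (ae_of_all _ fun θ => ?_) _)
  have hexp : ‖Complex.exp (Complex.I * θ)‖ = 1 := by
    rw [mul_comm]; exact Complex.norm_exp_ofReal_mul_I θ
  simpa [hexp, abs_of_nonneg (Real.sqrt_nonneg q)] using
    pow_le_one₀ (Real.sqrt_nonneg q) (Real.sqrt_le_one.mpr hq)

theorem mu_ae_mem_closedBall {q : ℝ} (hq : q ≤ 1) : ∀ᵐ ζ ∂mu q, ζ ∈ closedBall (0 : ℂ) 1 :=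
  Measure.ae_sum_iff.2 fun m => Measure.ae_smul_measure (nu_ae_mem_closedBall hq m) _

theorem exists_dist_comp_smul_lt {E β : Type*} [NormedAddCommGroup E] [NormedSpace ℝ E]
    [ProperSpace E] [PseudoMetricSpace β] {f : E → β} (hf : ContinuousOn f (closedBall 0 1))
    {ε : ℝ} (hε : 0 < ε) :
    ∃ r ∈ Set.Ioo (0 : ℝ) 1, ∀ z ∈ closedBall (0 : E) 1, dist (f z) (f (r • z)) < ε := by
  obtain ⟨δ, hδ, hfδ⟩ := Metric.uniformContinuousOn_iff.1
    ((isCompact_closedBall 0 1).uniformContinuousOn_of_continuous hf) ε hε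
  obtain ⟨r, hr, hr1⟩ := exists_between (max_lt zero_lt_one (sub_lt_self 1 hδ))
  have hr0 : 0 < r := (le_max_left _ _).trans_lt hr
  refine ⟨r, ⟨hr0, hr1⟩, fun z hz => hfδ z hz (r • z) ?_ ?_⟩
  · simpa [norm_smul, abs_of_pos hr0] using mul_le_one₀ hr1.le (norm_nonneg z) (by simpa using hz)
  · have hz : ‖z‖ ≤ 1 := by simpa using hz
    calc dist z (r • z) = (1 - r) * ‖z‖ := by
          rw [dist_eq_norm, ← norm_smul_of_nonneg (by linarith), sub_smul, one_smul]
      _ ≤ 1 - r := mul_le_of_le_one_right (by linarith) hz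
      _ < δ := by linarith [le_max_right (0 : ℝ) (1 - δ)]

open Polynomial in
theorem FormalMultilinearSeries.partialSum_eq_eval (p : FormalMultilinearSeries ℂ ℂ ℂ) (n : ℕ)
    (z : ℂ) : p.partialSum n z = (∑ k ∈ Finset.range n, C (p.coeff k) * X ^ k).eval z := by
  simp only [FormalMultilinearSeries.partialSum, eval_finsetSum, eval_mul, eval_C, eval_pow,
    eval_X, FormalMultilinearSeries.apply_eq_pow_smul_coeff, smul_eq_mul, mul_comm]

theorem exists_polynomial_dist_lt_of_differentiableOn_ball {f : ℂ → ℂ} {r R : ℝ≥0}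
    (hf : DifferentiableOn ℂ f (ball 0 R)) (hr : r < R) {ε : ℝ} (hε : 0 < ε) :
    ∃ P : ℂ[X], ∀ z ∈ closedBall (0 : ℂ) r, dist (f z) (P.eval z) < ε := by
  obtain ⟨R', hrR', hR'R⟩ := exists_between hr
  have hps := (hf.mono (closedBall_subset_ball hR'R)).hasFPowerSeriesOnBall
    (hrR'.trans_le' bot_le)
  have hK : closedBall (0 : ℂ) r ⊆ Metric.eball 0 R' :=
    (Metric.eball_coe (x := (0 : ℂ))) ▸ closedBall_subset_ball hrR'
  have hunif := (tendstoLocallyUniformlyOn_iff_forall_isCompact Metric.isOpen_eball).1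
    hps.tendstoLocallyUniformlyOn _ hK (isCompact_closedBall 0 r)
  obtain ⟨N, hN⟩ := (Metric.tendstoUniformlyOn_iff.1 hunif ε hε).exists
  exact ⟨_, fun z hz => by simpa [FormalMultilinearSeries.partialSum_eq_eval] using hN z hz⟩

theorem exists_polynomial_dist_lt_of_continuousOn_closedBall {f : ℂ → ℂ}
    (hfc : ContinuousOn f (closedBall 0 1)) (hfd : DifferentiableOn ℂ f (ball 0 1))
    {ε : ℝ} (hε : 0 < ε) :
    ∃ P : ℂ[X], ∀ z ∈ closedBall (0 : ℂ) 1, dist (f z) (P.eval z) < ε := by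
  obtain ⟨r, ⟨hr0, hr1⟩, hfr⟩ := exists_dist_comp_smul_lt hfc (half_pos hε)
  lift r to ℝ≥0 using hr0.le
  have hdil : DifferentiableOn ℂ (fun z => f ((r : ℝ) • z)) (ball 0 (r⁻¹ : ℝ≥0)) := by
    refine hfd.comp (by fun_prop) fun z hz => ?_
    have hz : ‖z‖ < (r : ℝ)⁻¹ := by simpa using hz
    simpa [norm_smul, mul_inv_cancel₀ hr0.ne'] using mul_lt_mul_of_pos_left hz hr0
  obtain ⟨P, hP⟩ := exists_polynomial_dist_lt_of_differentiableOn_ball hdil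
    (r := 1) (one_lt_inv₀ hr0 |>.2 hr1) (half_pos hε)
  exact ⟨P, fun z hz => (dist_triangle _ _ _).trans_lt
    (by simpa using add_lt_add (hfr z hz) (hP z (by simpa using hz)))⟩

section Lp

variable {α : Type*} [MeasurableSpace α] {μ : Measure α}

theorem MemLp.norm_toLp_top_le {E : Type*} [NormedAddCommGroup E] {f : α → E} (hf : MemLp f ∞ μ)
    {C : ℝ} (hC : 0 ≤ C) (hfC : ∀ᵐ x ∂μ, ‖f x‖ ≤ C) : ‖hf.toLp f‖ ≤ C := by
  rw [Lp.norm_toLp, eLpNorm_exponent_top]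
  exact ENNReal.toReal_le_of_le_ofReal hC (eLpNormEssSup_le_of_ae_bound hfC)

theorem ContinuousOn.memLp_top [TopologicalSpace α] [T2Space α] [OpensMeasurableSpace α]
    {E : Type*} [NormedAddCommGroup E] [SecondCountableTopologyEither α E] {g : α → E}
    {K : Set α} (hg : ContinuousOn g K) (hK : IsCompact K) (hμ : ∀ᵐ x ∂μ, x ∈ K) :
    MemLp g ∞ μ := by
  obtain ⟨C, hC⟩ := hK.exists_bound_of_continuousOn hg
  have hgm := hg.aestronglyMeasurable (μ := μ) hK.measurableSet
  rw [Measure.restrict_eq_self_of_ae_mem hμ] at hgm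
  exact memLp_top_of_bound hgm C (hμ.mono hC)

end Lp

theorem Submodule.topologicalClosure_span_le_comap {R M N : Type*} [Semiring R]
    [TopologicalSpace M] [AddCommMonoid M] [Module R M] [ContinuousAdd M] [ContinuousConstSMul R M]
    [TopologicalSpace N] [AddCommMonoid N] [Module R N]
    (f : M →L[R] N) {s : Set M} {t : Submodule R N} (ht : IsClosed (t : Set N))
    (h : ∀ x ∈ s, f x ∈ t) : (span R s).topologicalClosure ≤ t.comap (f : M →ₗ[R] N) :=
  (span R s).topologicalClosure_minimal (span_le.2 h) (ht.preimage f.continuous)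

section Hardy

open Polynomial

variable {μ : Measure ℂ}

/-- `Hsq q` is `hardySpace (mu q)` by definition. -/
def hardySpace (μ : Measure ℂ) : Submodule ℂ (Lp ℂ 2 μ) :=
  (Submodule.span ℂ {φ : Lp ℂ 2 μ | ∃ n : ℕ, (φ : ℂ → ℂ) =ᵐ[μ] fun ζ => ζ ^ n}).topologicalClosure

theorem isClosed_hardySpace : IsClosed (hardySpace μ : Set (Lp ℂ 2 μ)) :=
  Submodule.isClosed_topologicalClosure _

variable (μ) in
def mulL : Lp ℂ ∞ μ →L[ℂ] Lp ℂ 2 μ →L[ℂ] Lp ℂ 2 μ :=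
  (ContinuousLinearMap.mul ℂ ℂ).holderL μ ∞ 2 2

theorem coeFn_mulL (g : Lp ℂ ∞ μ) (φ : Lp ℂ 2 μ) : mulL μ g φ =ᵐ[μ] fun z => g z * φ z :=
  (ContinuousLinearMap.mul ℂ ℂ).coeFn_holder g φ

variable (μ) in
def hardyMultipliers : Submodule ℂ (Lp ℂ ∞ μ) where
  carrier := {g | ∀ φ ∈ hardySpace μ, mulL μ g φ ∈ hardySpace μ}
  add_mem' hg hh φ hφ := by simpa using add_mem (hg φ hφ) (hh φ hφ)
  zero_mem' φ _ := by simp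
  smul_mem' c g hg φ hφ := by simpa using Submodule.smul_mem _ c (hg φ hφ)

theorem isClosed_hardyMultipliers : IsClosed (hardyMultipliers μ : Set (Lp ℂ ∞ μ)) := by
  have : (hardyMultipliers μ : Set (Lp ℂ ∞ μ))
      = ⋂ φ ∈ hardySpace μ, (fun g => mulL μ g φ) ⁻¹' hardySpace μ := by
    ext g; simp [hardyMultipliers]
  rw [this]
  exact isClosed_biInter fun φ _ => isClosed_hardySpace.preimage ((mulL μ).flip φ).continuous

theorem toLp_pow_mem_hardyMultipliers (k : ℕ) (hk : MemLp (fun z : ℂ => z ^ k) ∞ μ) :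
    hk.toLp _ ∈ hardyMultipliers μ := fun φ hφ => by
  refine Submodule.topologicalClosure_span_le_comap _ isClosed_hardySpace ?_ hφ
  rintro ψ ⟨n, hn⟩
  refine Submodule.le_topologicalClosure _ (Submodule.subset_span ⟨k + n, ?_⟩)
  filter_upwards [coeFn_mulL (hk.toLp _) ψ, hk.coeFn_toLp, hn] with z h1 h2 h3
  rw [h1, h2, h3, pow_add]

theorem toLp_eval_mem_hardyMultipliers (hμ : ∀ᵐ z ∂μ, z ∈ closedBall (0 : ℂ) 1) (P : ℂ[X]) :
    (P.continuous.continuousOn.memLp_top (isCompact_closedBall 0 1) hμ).toLp (fun z => P.eval z)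
      ∈ hardyMultipliers μ := by
  induction P using Polynomial.induction_on' with
  | add P Q hP hQ =>
    convert add_mem hP hQ using 1
    rw [← MemLp.toLp_add]
    exact MemLp.toLp_congr _ _ (ae_of_all _ fun z => eval_add)
  | monomial n a =>
    convert Submodule.smul_mem _ a (toLp_pow_mem_hardyMultipliers n
      ((continuous_pow n).continuousOn.memLp_top (isCompact_closedBall 0 1) hμ)) using 1
    rw [← MemLp.toLp_const_smul]
    exact MemLp.toLp_congr _ _ (ae_of_all _ fun z => by simp)

theorem toLp_mem_hardyMultipliers (hμ : ∀ᵐ z ∂μ, z ∈ closedBall (0 : ℂ) 1) {g : ℂ → ℂ}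
    (hgc : ContinuousOn g (closedBall 0 1)) (hgd : DifferentiableOn ℂ g (ball 0 1)) :
    (hgc.memLp_top (isCompact_closedBall 0 1) hμ).toLp g ∈ hardyMultipliers μ := by
  refine isClosed_hardyMultipliers.closure_subset (Metric.mem_closure_iff.2 fun ε hε => ?_)
  obtain ⟨P, hP⟩ := exists_polynomial_dist_lt_of_continuousOn_closedBall hgc hgd (half_pos hε)
  refine ⟨_, toLp_eval_mem_hardyMultipliers hμ P, ?_⟩
  rw [dist_eq_norm, ← MemLp.toLp_sub]
  refine (MemLp.norm_toLp_top_le _ (half_pos hε).le ?_).trans_lt (half_lt_self hε)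
  filter_upwards [hμ] with z hz using by simpa [dist_eq_norm] using (hP z hz).le

theorem exists_mem_hardySpace_ae_eq_mul (hμ : ∀ᵐ z ∂μ, z ∈ closedBall (0 : ℂ) 1) {g : ℂ → ℂ}
    (hgc : ContinuousOn g (closedBall 0 1)) (hgd : DifferentiableOn ℂ g (ball 0 1))
    {φ : Lp ℂ 2 μ} (hφ : φ ∈ hardySpace μ) :
    ∃ ψ ∈ hardySpace μ, ψ =ᵐ[μ] fun z => g z * φ z := by
  have hg := hgc.memLp_top (isCompact_closedBall 0 1) hμ
  refine ⟨mulL μ (hg.toLp g) φ, toLp_mem_hardyMultipliers hμ hgc hgd φ hφ, ?_⟩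
  filter_upwards [coeFn_mulL (hg.toLp g) φ, hg.coeFn_toLp] with z h1 h2
  rw [h1, h2]

end Hardy

section Toeplitz

variable {α : Type*} [MeasurableSpace α] {μ : Measure α} {K : Submodule ℂ (Lp ℂ 2 μ)}

theorem ContinuousLinearMap.coeFn_apply_ae_eq_mul {A : K →L[ℂ] K} {g : α → ℂ}
    (hA : ∀ φ ψ : K, inner ℂ (ψ : Lp ℂ 2 μ) (A φ : Lp ℂ 2 μ)
      = ∫ z, (starRingEnd ℂ) ((ψ : Lp ℂ 2 μ) z) * g z * (φ : Lp ℂ 2 μ) z ∂μ)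
    (hg : ∀ φ : K, ∃ v ∈ K, v =ᵐ[μ] fun z => g z * (φ : Lp ℂ 2 μ) z) (φ : K) :
    (A φ : Lp ℂ 2 μ) =ᵐ[μ] fun z => g z * (φ : Lp ℂ 2 μ) z := by
  obtain ⟨v, hvK, hv⟩ := hg φ
  suffices A φ = ⟨v, hvK⟩ by rw [this]; exact hv
  refine ext_inner_left ℂ fun ψ => ?_
  rw [Submodule.coe_inner, Submodule.coe_inner, hA, L2.inner_def]
  refine integral_congr_ae ?_
  filter_upwards [hv] with z hz
  rw [RCLike.inner_apply, hz]
  ring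

theorem ContinuousLinearMap.comp_comm_of_ae_eq_mul {A B : K →L[ℂ] K} {f g : α → ℂ}
    (hA : ∀ φ : K, (A φ : Lp ℂ 2 μ) =ᵐ[μ] fun z => f z * (φ : Lp ℂ 2 μ) z)
    (hB : ∀ φ : K, (B φ : Lp ℂ 2 μ) =ᵐ[μ] fun z => g z * (φ : Lp ℂ 2 μ) z) :
    A.comp B = B.comp A := by
  refine ContinuousLinearMap.ext fun φ => Subtype.ext (Lp.ext ?_)
  filter_upwards [hA (B φ), hB φ, hB (A φ), hA φ] with z h1 h2 h3 h4
  simp only [ContinuousLinearMap.comp_apply, h1, h2, h3, h4]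
  ring

end Toeplitz

theorem stmt14_general (q : ℝ) (hq1 : q < 1)
    (T : (ℂ → ℂ) → (Hsq q →L[ℂ] Hsq q))
    (hT : ∀ g : ℂ → ℂ, ContinuousOn g (closedBall 0 1) → ∀ φ ψ : Hsq q,
      (inner ℂ (ψ : Lp ℂ 2 (mu q)) ((T g φ : Lp ℂ 2 (mu q))) : ℂ)
        = ∫ ζ, (starRingEnd ℂ) ((ψ : Lp ℂ 2 (mu q)) ζ) * g ζ * (φ : Lp ℂ 2 (mu q)) ζ
            ∂(mu q))
    (f : ℂ → ℂ)
    (hfc : ContinuousOn f (closedBall 0 1))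
    (hfh : DifferentiableOn ℂ f (ball 0 1)) :
    (∀ φ : Hsq q, ((T f φ : Lp ℂ 2 (mu q)) : ℂ → ℂ)
        =ᵐ[mu q] fun ζ => f ζ * (φ : Lp ℂ 2 (mu q)) ζ) ∧
    (T f).comp (T fun ζ => ζ) = (T fun ζ => ζ).comp (T f) := by
  have hT_mul : ∀ g : ℂ → ℂ, ContinuousOn g (closedBall 0 1) → DifferentiableOn ℂ g (ball 0 1) →
      ∀ φ : Hsq q, ((T g φ : Lp ℂ 2 (mu q)) : ℂ → ℂ)
        =ᵐ[mu q] fun ζ => g ζ * (φ : Lp ℂ 2 (mu q)) ζ :=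
    fun g hgc hgd => (T g).coeFn_apply_ae_eq_mul (hT g hgc) fun φ =>
      exists_mem_hardySpace_ae_eq_mul (mu_ae_mem_closedBall hq1.le) hgc hgd φ.2
  have hf := hT_mul f hfc hfh
  exact ⟨hf, ContinuousLinearMap.comp_comm_of_ae_eq_mul hf
    (hT_mul _ continuousOn_id differentiableOn_id)⟩

/-- For `f` continuous on the closed disk and holomorphic inside, multiplication by `f`
preserves `H²` (so `T(f)φ = f·φ`), and `T(f)` commutes with `T(ζ)`. -/
theorem stmt14 (q : ℝ) (hq0 : 0 < q) (hq1 : q < 1)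
    (T : (ℂ → ℂ) → (Hsq q →L[ℂ] Hsq q))
    (hT : ∀ g : ℂ → ℂ, ContinuousOn g (closedBall 0 1) → ∀ φ ψ : Hsq q,
      (inner ℂ (ψ : Lp ℂ 2 (mu q)) ((T g φ : Lp ℂ 2 (mu q))) : ℂ)
        = ∫ ζ, (starRingEnd ℂ) ((ψ : Lp ℂ 2 (mu q)) ζ) * g ζ * (φ : Lp ℂ 2 (mu q)) ζ
            ∂(mu q))
    (f : ℂ → ℂ)
    (hfc : ContinuousOn f (closedBall 0 1))
    (hfh : DifferentiableOn ℂ f (ball 0 1)) :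
    (∀ φ : Hsq q, ((T f φ : Lp ℂ 2 (mu q)) : ℂ → ℂ)
        =ᵐ[mu q] fun ζ => f ζ * (φ : Lp ℂ 2 (mu q)) ζ) ∧
    (T f).comp (T fun ζ => ζ) = (T fun ζ => ζ).comp (T f) :=
  stmt14_general q hq1 T hT f hfc hfh

end
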